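/- Let E be the edge set of a graph and E₀ ⊆ E with no bad loops (no cycle having exactly one edge outside E₀). Let v, w be two vertices, and suppose there is both a path from v to w all of whose edges lie in E₀, and a path from v to w with exactly one edge outside E₀. Then adding a new edge f joining v and w creates a bad loop whether f is declared to be in E₀ or in its complement. Contrapositively: if E₀ has no bad loops, then for any two vertices v, w at least one of the two extensions (f ∈ E₀ or f ∉ E₀) of the subset to E ∪ {f} has no bad loop passing through f. -/

import Mathlib

/-!
Let `H` be the graph with edge set `E₀`. A cycle whose only edge outside a set `S` is `s(a, b)`
is exactly an edge `s(a, b) ∉ S` together with an `S`-path from `a` to `b`; so `E₀` has no bad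
loops iff no edge of `G` outside `E₀` joins two vertices in the same component of `H`.
Both paths from `v` to `w`, closed up by `f = s(v, w)`, give the two bad loops. Conversely,
a bad loop through `f ∉ E₀` puts `v` and `w` in one component of `H`; then a bad loop for
`E₀ ∪ {f}` gives an edge of `G` outside `E₀` whose endpoints are joined in `H ⊔ edge v w`,
hence in `H`, so `E₀` already had a bad loop.
-/

/-- `BadLoopThrough G' E₀' f` says the graph `G'` contains a bad loop for the
edge set `E₀'` passing through the edge `f`: a cycle containing `f` with
exactly one edge not in `E₀'`. -/
def BadLoopThrough {V : Type*} (G' : SimpleGraph V) (E₀' : Set (Sym2 V)) (f : Sym2 V) : Prop :=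
  ∃ (u : V) (p : G'.Walk u u), p.IsCycle ∧ f ∈ p.edges ∧ ∃! e, e ∈ p.edges ∧ e ∉ E₀'

/-- `E₀` has no bad loops: no cycle of the graph has exactly one edge
outside `E₀`. -/
def NoBadLoops {V : Type*} (G : SimpleGraph V) (E₀ : Set (Sym2 V)) : Prop :=
  ∀ (u : V) (p : G.Walk u u), p.IsCycle → ¬ ∃! e, e ∈ p.edges ∧ e ∉ E₀

open SimpleGraph

namespace SimpleGraph

variable {V : Type*} {G H : SimpleGraph V}

lemma Walk.IsCycle.reachable_of_edges_subset {u x y : V} {c : G.Walk u u} (hc : c.IsCycle)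
    (hxy : s(x, y) ∈ c.edges) (hH : ∀ e ∈ c.edges, e ≠ s(x, y) → e ∈ H.edgeSet) :
    H.Reachable x y := by
  -- Apply the cycle criterion for bridges inside the graph `K` formed by the edges of `c`.
  set K := fromEdgeSet {e | e ∈ c.edges}
  have hcK : ∀ e ∈ c.edges, e ∈ K.edgeSet := fun e he => edgeSet_fromEdgeSet _ ▸
    ⟨he, G.not_isDiag_of_mem_edgeSet (c.edges_subset_edgeSet he)⟩
  have hK := adj_and_reachable_delete_edges_iff_exists_cycle.mpr
    ⟨u, c.transfer K hcK, hc.transfer hcK, by rwa [Walk.edges_transfer]⟩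
  refine hK.2.mono fun a b hab => ?_
  rw [deleteEdges_adj, fromEdgeSet_adj, Set.mem_singleton_iff] at hab
  exact hH _ hab.1.1 hab.2

lemma Reachable.of_sup_edge {v w a b : V} (h : (H ⊔ edge v w).Reachable a b)
    (hvw : H.Reachable v w) : H.Reachable a b := by
  obtain ⟨p⟩ := h
  induction p with
  | nil => rfl
  | cons hadj _ ih =>
    refine Reachable.trans ?_ ih
    rcases hadj with hadj | hadj
    · exact hadj.reachable
    · rcases (edge_adj _ _ _ _).mp hadj with ⟨⟨rfl, rfl⟩ | ⟨rfl, rfl⟩, -⟩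
      · exact hvw
      · exact hvw.symm

lemma Walk.IsCycle.reachable_fromEdgeSet_of_existsUnique {S : Set (Sym2 V)} {u a b : V}
    {c : G.Walk u u} (hc : c.IsCycle) (hab : s(a, b) ∈ c.edges) (habS : s(a, b) ∉ S)
    (huniq : ∃! e, e ∈ c.edges ∧ e ∉ S) : (fromEdgeSet S).Reachable a b :=
  hc.reachable_of_edges_subset hab fun _ he hne => edgeSet_fromEdgeSet S ▸
    ⟨not_not.mp fun heS => hne (huniq.unique ⟨he, heS⟩ ⟨hab, habS⟩),
      G.not_isDiag_of_mem_edgeSet (c.edges_subset_edgeSet he)⟩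

end SimpleGraph

section

variable {V : Type*} {G : SimpleGraph V} {S : Set (Sym2 V)}

lemma BadLoopThrough.reachable_fromEdgeSet {x y : V} (h : BadLoopThrough G S s(x, y))
    (hf : s(x, y) ∉ S) : (fromEdgeSet S).Reachable x y :=
  let ⟨_, _, hc, hfc, huniq⟩ := h
  hc.reachable_fromEdgeSet_of_existsUnique hfc hf huniq

lemma BadLoopThrough.exists_adj_reachable_fromEdgeSet {f : Sym2 V}
    (h : BadLoopThrough G S f) :
    ∃ a b, G.Adj a b ∧ s(a, b) ∉ S ∧ (fromEdgeSet S).Reachable a b := by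
  obtain ⟨_, c, hc, -, huniq⟩ := h
  obtain ⟨⟨a, b⟩, he, heS⟩ := huniq.exists
  exact ⟨a, b, c.adj_of_mem_edges he, heS,
    hc.reachable_fromEdgeSet_of_existsUnique he heS huniq⟩

lemma NoBadLoops.not_reachable_fromEdgeSet (h : NoBadLoops G S) (hS : S ⊆ G.edgeSet)
    {a b : V} (hab : G.Adj a b) (habS : s(a, b) ∉ S) : ¬ (fromEdgeSet S).Reachable a b := by
  intro hreach
  have hSG : fromEdgeSet S ≤ G := fun _ _ h => hS h.1
  obtain ⟨p, hp⟩ := hreach.symm.exists_isPath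
  have hpS : ∀ e ∈ p.edges, e ∈ S := fun e he =>
    (edgeSet_fromEdgeSet S ▸ p.edges_subset_edgeSet he).1
  refine h a (.cons hab (p.mapLe hSG)) ?_ ⟨s(a, b), ⟨List.mem_cons_self, habS⟩, ?_⟩
  · refine Walk.cons_isCycle_iff _ _ |>.mpr ⟨hp.mapLe hSG, ?_⟩
    simpa using fun h => habS (hpS _ h)
  · rintro e ⟨he, heS⟩
    simp only [Walk.edges_cons, Walk.edges_mapLe_eq_edges, List.mem_cons] at he
    exact he.resolve_right fun he => heS (hpS e he)

lemma SimpleGraph.Walk.IsPath.badLoopThrough_sup_edge {v w : V} {p : G.Walk v w}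
    (hp : p.IsPath) (hvw : v ≠ w) (hnadj : ¬ G.Adj v w)
    (hbad : ∃! e, e ∈ s(v, w) :: p.edges ∧ e ∉ S) :
    BadLoopThrough (G ⊔ edge v w) S s(v, w) := by
  have hadj : (G ⊔ edge v w).Adj w v :=
    Or.inr ((edge_adj _ _ _ _).mpr ⟨Or.inr ⟨rfl, rfl⟩, hvw.symm⟩)
  have hedges : (Walk.cons hadj (p.mapLe le_sup_left)).edges = s(v, w) :: p.edges := by
    simp [Sym2.eq_swap]
  refine ⟨w, _, Walk.cons_isCycle_iff _ _ |>.mpr ⟨hp.mapLe le_sup_left, ?_⟩, by simp [hedges],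
    hedges ▸ hbad⟩
  simpa [Sym2.eq_swap] using fun h => hnadj (p.adj_of_mem_edges h)

end

/-- Inserting a new edge `f = s(v,w)`.
(1) If there is a path from `v` to `w` all of whose edges lie in `E₀`, and a
path from `v` to `w` with exactly one edge outside `E₀`, then adding `f`
creates a bad loop through `f` whether `f` is declared to be in `E₀` or not.
(2) Contrapositively, if `E₀` has no bad loops, then at least one of the two
extensions (`f ∈ E₀` or `f ∉ E₀`) of `E₀` to the enlarged edge set admits no
bad loop passing through `f`. -/
theorem insert_edge_no_bad_loops {V : Type*} (G : SimpleGraph V) (E₀ : Set (Sym2 V))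
    (hE₀ : E₀ ⊆ G.edgeSet) (v w : V) (hvw : v ≠ w) (hnadj : ¬ G.Adj v w) :
    ((∃ p : G.Walk v w, p.IsPath ∧ ∀ e ∈ p.edges, e ∈ E₀) →
      (∃ q : G.Walk v w, q.IsPath ∧ ∃! e, e ∈ q.edges ∧ e ∉ E₀) →
      BadLoopThrough (G ⊔ SimpleGraph.fromEdgeSet {s(v, w)}) (E₀ ∪ {s(v, w)}) s(v, w) ∧
      BadLoopThrough (G ⊔ SimpleGraph.fromEdgeSet {s(v, w)}) E₀ s(v, w)) ∧
    (NoBadLoops G E₀ →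
      ¬ BadLoopThrough (G ⊔ SimpleGraph.fromEdgeSet {s(v, w)}) (E₀ ∪ {s(v, w)}) s(v, w) ∨
      ¬ BadLoopThrough (G ⊔ SimpleGraph.fromEdgeSet {s(v, w)}) E₀ s(v, w)) := by
  have hf : s(v, w) ∉ G.edgeSet := hnadj
  refine ⟨fun ⟨p, hp, hpE₀⟩ ⟨q, hq, hqbad⟩ => ⟨?_, ?_⟩, fun hno => ?_⟩
  · refine hq.badLoopThrough_sup_edge hvw hnadj ?_
    obtain ⟨e₀, ⟨he₀, he₀E₀⟩, huniq⟩ := hqbad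
    refine ⟨e₀, ⟨List.mem_cons_of_mem _ he₀, ?_⟩, ?_⟩
    · rintro (h | rfl)
      exacts [he₀E₀ h, hf (q.edges_subset_edgeSet he₀)]
    · rintro e ⟨he, heS⟩
      rcases List.mem_cons.mp he with rfl | he
      · exact absurd (Or.inr rfl) heS
      · exact huniq e ⟨he, fun h => heS (Or.inl h)⟩
  · refine hp.badLoopThrough_sup_edge hvw hnadj
      ⟨s(v, w), ⟨List.mem_cons_self, fun h => hf (hE₀ h)⟩, ?_⟩
    rintro e ⟨he, heS⟩
    rcases List.mem_cons.mp he with rfl | he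
    exacts [rfl, absurd (hpE₀ e he) heS]
  · by_contra! ⟨h₁, h₂⟩
    have hvw₀ := h₂.reachable_fromEdgeSet fun h => hf (hE₀ h)
    obtain ⟨a, b, hab, habS, hreach⟩ := h₁.exists_adj_reachable_fromEdgeSet
    rw [fromEdgeSet_union] at hreach
    refine hno.not_reachable_fromEdgeSet hE₀ ?_ (fun h => habS (Or.inl h))
      (hreach.of_sup_edge hvw₀)
    exact hab.resolve_right fun h => habS (Or.inr ((adj_edge _ _).mp h).1.symm)
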